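/- arXiv:2212.09933 — 6 statements merged into one kernel-verified Lean document; each statement's English description precedes it below -/
import Mathlib

section
/- For every n ≥ 2 there is no family (f_x)_{x ∈ L^n_n} assigning an outcome f_x to every maximal isotropic subspace x of (ZMod 2)^{2n} such that all pairs of outcomes in the family are consistent. In other words, L^n admits no hidden variable assignment that is both complete and consistent. -/
open Finset

abbrev F2 := ZMod 2
/-- `F2^{2n}`, split into the first and last `n` coordinates. -/
abbrev PV (n : ℕ) := (Fin n → F2) × (Fin n → F2)

/-- Symplectic product on `F2^{2n}`: zero iff `a₁·b₂ = a₂·b₁`. -/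
def symp {n : ℕ} (a b : PV n) : F2 :=
  (∑ i, a.1 i * b.2 i) + (∑ i, a.2 i * b.1 i)

/-- A subspace is isotropic if the symplectic product vanishes on it. -/
def IsIsotropic {n : ℕ} (S : Submodule F2 (PV n)) : Prop :=
  ∀ x ∈ S, ∀ y ∈ S, symp x y = 0

/-- `Lset n k` = `L^n_k`, the set of `k`-dimensional isotropic subspaces of `F2^{2n}`. -/
def Lset (n k : ℕ) : Set (Submodule F2 (PV n)) :=
  {S | IsIsotropic S ∧ Module.finrank F2 S = k}

/-- Integer lift of a vector over `F2`, with values in `{0,1} ⊆ ℤ`. -/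
def liftZ {n : ℕ} (v : Fin n → F2) : Fin n → ℤ := fun i => ((v i).val : ℤ)

def dotZ {n : ℕ} (a b : Fin n → ℤ) : ℤ := ∑ i, a i * b i

/-- The phase `i^{x̂₁·x̂₂} · i^{ŷ₁·ŷ₂} · i^{−((x+y)^^₁·(x+y)^^₂)} · (−1)^{x̂₂·ŷ₁}`. -/
noncomputable def phase {n : ℕ} (x y : PV n) : ℂ :=
  Complex.I ^ (dotZ (liftZ x.1) (liftZ x.2)) *
  Complex.I ^ (dotZ (liftZ y.1) (liftZ y.2)) *
  Complex.I ^ (-(dotZ (liftZ (x + y).1) (liftZ (x + y).2))) *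
  (-1 : ℂ) ^ (dotZ (liftZ x.2) (liftZ y.1))

/-- `w(x,y) ∈ {0,1} ⊆ F2`: zero iff the phase equals `1`. -/
noncomputable def wght {n : ℕ} (x y : PV n) : F2 :=
  if phase x y = 1 then 0 else 1

/-- An outcome of an isotropic subspace `S` is `f : S → F2` with
`f(x+y) = f(x)+f(y)+w(x,y)`. -/
def IsOutcome {n : ℕ} (S : Submodule F2 (PV n)) (f : S → F2) : Prop :=
  ∀ x y : S, f (x + y) = f x + f y + wght (x : PV n) (y : PV n)

/-- Two outcomes are consistent if they agree on the intersection of their domains. -/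
def ConsistentOn {n : ℕ} {S₁ S₂ : Submodule F2 (PV n)} (f₁ : S₁ → F2) (f₂ : S₂ → F2) : Prop :=
  ∀ v (h1 : v ∈ S₁) (h2 : v ∈ S₂), f₁ ⟨v, h1⟩ = f₂ ⟨v, h2⟩

/-!
Mermin–Peres magic square. On the first two qubits take the square

  X₀      X₁      X₀X₁
  Z₁      Z₀      Z₀Z₁
  X₀Z₁    X₁Z₀    Y₀Y₁

and complete each of its rows and columns by Z on the remaining qubits: this gives six maximal
isotropic subspaces. An outcome f of a context containing a, b satisfies
f(a) + f(b) + f(a + b) = w(a, b), so summing over the three rows, and over the three columns,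
both give the sum of a consistent assignment over all nine entries. Hence the row weights and the
column weights have the same sum; but the former is 0 and the latter is 1.
-/

open Submodule

variable {n : ℕ}

lemma symp_add_left (x y z : PV n) : symp (x + y) z = symp x z + symp y z := by
  simp only [symp, Prod.fst_add, Prod.snd_add, Pi.add_apply, add_mul, sum_add_distrib]
  ring

lemma symp_smul_left (c : F2) (x y : PV n) : symp (c • x) y = c * symp x y := by
  simp only [symp, Prod.smul_fst, Prod.smul_snd, Pi.smul_apply, smul_eq_mul, mul_add, mul_sum,
    mul_assoc]

lemma symp_comm (x y : PV n) : symp x y = symp y x := by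
  simp only [symp, mul_comm (x.1 _), mul_comm (x.2 _)]
  ring

lemma symp_self (x : PV n) : symp x x = 0 := by
  simp only [symp, mul_comm (x.2 _)]
  exact CharTwo.add_self_eq_zero _

def sympForm : LinearMap.BilinForm F2 (PV n) :=
  LinearMap.mk₂ F2 symp symp_add_left symp_smul_left
    (fun x y z => by simp only [symp_comm x, symp_add_left])
    (fun c x y => by simp only [symp_comm x, symp_smul_left, smul_eq_mul])

lemma isIsotropic_span {s : Set (PV n)} (hs : ∀ x ∈ s, ∀ y ∈ s, symp x y = 0) :
    IsIsotropic (span F2 s) := by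
  have hleft : ∀ y ∈ s, span F2 s ≤ LinearMap.ker (sympForm.flip y) :=
    fun y hy => span_le.mpr fun x hx => hs x hx y hy
  intro x hx y hy
  have hright : span F2 s ≤ LinearMap.ker (sympForm x) := span_le.mpr fun y hy' => hleft y hy' hx
  exact hright hy

lemma span_range_mem_Lset {v : Fin n → PV n} (hv : ∀ i j, symp (v i) (v j) = 0)
    (Φ : PV n →ₗ[F2] Fin n → F2) (hΦ : ∀ i, Φ (v i) = Pi.single i 1) :
    span F2 (Set.range v) ∈ Lset n n := by
  refine ⟨isIsotropic_span ?_, ?_⟩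
  · rintro _ ⟨i, rfl⟩ _ ⟨j, rfl⟩
    exact hv i j
  · have hli : LinearIndependent F2 v := by
      refine LinearIndependent.of_comp Φ ?_
      convert (Pi.basisFun F2 (Fin n)).linearIndependent
      ext1 i
      simp [hΦ]
    rw [finrank_span_eq_card hli, Fintype.card_fin]

def pauliX (k : Fin n) : PV n := (Pi.single k 1, 0)

def pauliZ (k : Fin n) : PV n := (0, Pi.single k 1)

def xCoord (k : Fin n) : PV n →ₗ[F2] F2 := (LinearMap.proj k).comp (LinearMap.fst F2 _ _)

def zCoord (k : Fin n) : PV n →ₗ[F2] F2 := (LinearMap.proj k).comp (LinearMap.snd F2 _ _)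

@[simp] lemma xCoord_apply (k : Fin n) (x : PV n) : xCoord k x = x.1 k := rfl

@[simp] lemma zCoord_apply (k : Fin n) (x : PV n) : zCoord k x = x.2 k := rfl

@[simp] lemma pauliZ_fst (k : Fin n) : (pauliZ k).1 = 0 := rfl

@[simp] lemma pauliZ_snd (k : Fin n) : (pauliZ k).2 = Pi.single k 1 := rfl

lemma symp_pauliZ (x : PV n) (k : Fin n) : symp x (pauliZ k) = x.1 k := by
  simp [symp, pauliZ, Pi.single_apply]

lemma symp_pauliZ_left (x : PV n) (k : Fin n) : symp (pauliZ k) x = x.1 k := by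
  rw [symp_comm, symp_pauliZ]

variable {m : ℕ}

def paddedContext (a b : PV (m + 2)) : Submodule F2 (PV (m + 2)) :=
  span F2 (Set.range
    (Fin.cons a (Fin.cons b fun j => pauliZ j.succ.succ) : Fin (m + 2) → PV (m + 2)))

-- φ, ψ and the Z-coordinates of the padding qubits form a family dual to the generators.
lemma paddedContext_mem_Lset {a b : PV (m + 2)}
    (ha : ∀ j : Fin m, a.1 j.succ.succ = 0 ∧ a.2 j.succ.succ = 0)
    (hb : ∀ j : Fin m, b.1 j.succ.succ = 0 ∧ b.2 j.succ.succ = 0) (hab : symp a b = 0)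
    (φ ψ : PV (m + 2) →ₗ[F2] F2)
    (hφ : φ a = 1 ∧ φ b = 0 ∧ ∀ j : Fin m, φ (pauliZ j.succ.succ) = 0)
    (hψ : ψ a = 0 ∧ ψ b = 1 ∧ ∀ j : Fin m, ψ (pauliZ j.succ.succ) = 0) :
    paddedContext a b ∈ Lset (m + 2) (m + 2) := by
  refine span_range_mem_Lset ?_
    (LinearMap.pi (Fin.cons φ (Fin.cons ψ fun j => zCoord j.succ.succ))) ?_
  · intro i j
    refine Fin.cases ?_ (Fin.cases ?_ fun i => ?_) i <;>
      refine Fin.cases ?_ (Fin.cases ?_ fun j => ?_) j <;>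
      simp [symp_self, symp_pauliZ, symp_pauliZ_left, hab, symp_comm b a, ha, hb]
  · intro i
    ext k
    refine Fin.cases ?_ (Fin.cases ?_ fun i => ?_) i <;>
      refine Fin.cases ?_ (Fin.cases ?_ fun k => ?_) k <;>
      simp [hφ, hψ, ha, hb, Pi.single_apply, Fin.succ_succ_ne_one]

lemma mem_paddedContext (a b : PV (m + 2)) : a ∈ paddedContext a b ∧ b ∈ paddedContext a b :=
  ⟨subset_span ⟨0, rfl⟩, subset_span ⟨1, rfl⟩⟩

variable (m) in
def merminSquare : Fin 3 → Fin 3 → PV (m + 2) :=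
  ![![pauliX 0, pauliX 1, pauliX 0 + pauliX 1],
    ![pauliZ 1, pauliZ 0, pauliZ 0 + pauliZ 1],
    ![pauliX 0 + pauliZ 1, pauliX 1 + pauliZ 0, pauliX 0 + pauliX 1 + pauliZ 0 + pauliZ 1]]

lemma merminSquare_row_add (i : Fin 3) :
    merminSquare m i 0 + merminSquare m i 1 = merminSquare m i 2 := by
  fin_cases i <;> simp [merminSquare] <;> abel

lemma merminSquare_col_add (j : Fin 3) :
    merminSquare m 0 j + merminSquare m 1 j = merminSquare m 2 j := by
  fin_cases j <;> simp [merminSquare]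
  abel

lemma merminSquare_row_mem_Lset (i : Fin 3) :
    paddedContext (merminSquare m i 0) (merminSquare m i 1) ∈ Lset (m + 2) (m + 2) := by
  fin_cases i <;>
    [refine paddedContext_mem_Lset ?_ ?_ ?_ (xCoord 0) (xCoord 1) ?_ ?_;
     refine paddedContext_mem_Lset ?_ ?_ ?_ (zCoord 1) (zCoord 0) ?_ ?_;
     refine paddedContext_mem_Lset ?_ ?_ ?_ (xCoord 0) (xCoord 1) ?_ ?_] <;>
    simp [merminSquare, pauliX, pauliZ, symp, Pi.single_apply, Fin.succ_succ_ne_one,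
      CharTwo.add_self_eq_zero]

lemma merminSquare_col_mem_Lset (j : Fin 3) :
    paddedContext (merminSquare m 0 j) (merminSquare m 1 j) ∈ Lset (m + 2) (m + 2) := by
  fin_cases j <;>
    [refine paddedContext_mem_Lset ?_ ?_ ?_ (xCoord 0) (zCoord 1) ?_ ?_;
     refine paddedContext_mem_Lset ?_ ?_ ?_ (xCoord 1) (zCoord 0) ?_ ?_;
     refine paddedContext_mem_Lset ?_ ?_ ?_ (xCoord 0) (zCoord 0) ?_ ?_] <;>
    simp [merminSquare, pauliX, pauliZ, symp, Fin.sum_univ_succ, Pi.single_apply,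
      Fin.succ_succ_ne_one, CharTwo.add_self_eq_zero]

lemma cast_one_int : (ZMod.cast (1 : F2) : ℤ) = 1 := rfl

lemma sum_wght_merminSquare_rows :
    ∑ i, wght (merminSquare m i 0) (merminSquare m i 1) = 0 := by
  simp [merminSquare, wght, phase, pauliX, pauliZ, dotZ, liftZ, Fin.sum_univ_succ,
    Fin.succ_succ_ne_one, cast_one_int]

-- Only the last column has a sign: X₀X₁ · Z₀Z₁ = -Y₀Y₁.
lemma sum_wght_merminSquare_cols :
    ∑ j, wght (merminSquare m 0 j) (merminSquare m 1 j) = 1 := by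
  simp [merminSquare, wght, phase, pauliX, pauliZ, dotZ, liftZ, Fin.sum_univ_succ,
    Fin.succ_succ_ne_one, cast_one_int]
  norm_num

lemma wght_eq_of_isOutcome {S : Submodule F2 (PV n)} {g : S → F2} (hg : IsOutcome S g)
    (a b : S) : wght (a : PV n) b = g a + g b + g (a + b) := by
  grind [hg a b]

theorem sum_wght_rows_eq_sum_wght_cols (f : (S : Submodule F2 (PV n)) → S → F2)
    (E : Fin 3 → Fin 3 → PV n) (hrow : ∀ i, E i 0 + E i 1 = E i 2)
    (hcol : ∀ j, E 0 j + E 1 j = E 2 j) (R C : Fin 3 → Submodule F2 (PV n))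
    (hER : ∀ i, E i 0 ∈ R i ∧ E i 1 ∈ R i) (hEC : ∀ j, E 0 j ∈ C j ∧ E 1 j ∈ C j)
    (hR : ∀ i, IsOutcome (R i) (f (R i))) (hC : ∀ j, IsOutcome (C j) (f (C j)))
    (hRC : ∀ i j, ConsistentOn (f (R i)) (f (C j))) :
    ∑ i, wght (E i 0) (E i 1) = ∑ j, wght (E 0 j) (E 1 j) := by
  have memR : ∀ i j, E i j ∈ R i := fun i j =>
    match j with
    | 0 => (hER i).1
    | 1 => (hER i).2
    | 2 => hrow i ▸ add_mem (hER i).1 (hER i).2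
  have memC : ∀ i j, E i j ∈ C j := fun i j =>
    match i with
    | 0 => (hEC j).1
    | 1 => (hEC j).2
    | 2 => hcol j ▸ add_mem (hEC j).1 (hEC j).2
  calc ∑ i, wght (E i 0) (E i 1)
      = ∑ i, ∑ j, f (R i) ⟨E i j, memR i j⟩ := by
        refine sum_congr rfl fun i _ => ?_
        rw [Fin.sum_univ_three, wght_eq_of_isOutcome (hR i) ⟨_, memR i 0⟩ ⟨_, memR i 1⟩]
        simp only [AddMemClass.mk_add_mk, hrow]
    _ = ∑ j, ∑ i, f (C j) ⟨E i j, memC i j⟩ := by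
        rw [sum_comm]
        exact sum_congr rfl fun j _ => sum_congr rfl fun i _ => hRC i j _ _ _
    _ = ∑ j, wght (E 0 j) (E 1 j) := by
        refine sum_congr rfl fun j _ => ?_
        rw [Fin.sum_univ_three, wght_eq_of_isOutcome (hC j) ⟨_, memC 0 j⟩ ⟨_, memC 1 j⟩]
        simp only [AddMemClass.mk_add_mk, hcol]

/-- For every `n ≥ 2`, there is no family assigning an outcome to every maximal isotropic
subspace of `F2^{2n}` such that all pairs of outcomes are consistent. -/
theorem no_complete_consistent_assignment :
    ∀ n : ℕ, 2 ≤ n →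
      ¬ ∃ f : (S : Submodule F2 (PV n)) → (S → F2),
          (∀ S ∈ Lset n n, IsOutcome S (f S)) ∧
          (∀ S₁ ∈ Lset n n, ∀ S₂ ∈ Lset n n, ConsistentOn (f S₁) (f S₂)) := by
  rintro n hn ⟨f, hout, hcons⟩
  obtain ⟨m, rfl⟩ := Nat.exists_eq_add_of_le' hn
  have hR := merminSquare_row_mem_Lset (m := m)
  have hC := merminSquare_col_mem_Lset (m := m)
  have key := sum_wght_rows_eq_sum_wght_cols f (merminSquare m) merminSquare_row_add
    merminSquare_col_add _ _ (fun _ => mem_paddedContext _ _) (fun _ => mem_paddedContext _ _)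
    (fun i => hout _ (hR i)) (fun j => hout _ (hC j)) (fun i j => hcons _ (hR i) _ (hC j))
  rw [sum_wght_merminSquare_rows, sum_wght_merminSquare_cols] at key
  exact zero_ne_one key
end

section
/- Pval(L^2) = 4/5. Concretely: among the 15 maximal (2-dimensional) isotropic subspaces of (ZMod 2)^4, the maximum size of a subset D admitting a pairwise consistent family of outcomes (f_x)_{x∈D} is exactly 12. -/
open Finset

/-!
The 15 maximal isotropic planes of `F2^4` are the lines of the generalized quadrangle `GQ(2,2)`,
whose points are the 15 nonzero vectors. Pairwise consistent outcomes on a set `D` of lines glue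
to one function `g` on `F2^4`, and on each line `{u, v, u + v}` of `D` the outcome relation reads
`g u + g v + g (u + v) = w(u, v)`. `GQ(2,2)` contains 10 grids, sets of six lines covering each of
their points exactly twice, so summing this relation over a grid contained in `D` gives `0` on the
left, whereas `w(u, v)` sums to `1` over every grid. Each line lies in four grids, so removing two
lines leaves a grid intact: at most 12 lines carry consistent outcomes. Conversely `w` vanishes
on 12 of the planes, where the zero outcomes are consistent.
-/

def phaseExp {n : ℕ} (x y : PV n) : ℤ :=
  dotZ (liftZ x.1) (liftZ x.2) + dotZ (liftZ y.1) (liftZ y.2)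
    - dotZ (liftZ (x + y).1) (liftZ (x + y).2) + 2 * dotZ (liftZ x.2) (liftZ y.1)

lemma phase_eq_I_zpow {n : ℕ} (x y : PV n) : phase x y = Complex.I ^ phaseExp x y := by
  have hI := Complex.I_ne_zero
  rw [phase, phaseExp, ← Complex.I_sq, ← zpow_natCast, ← zpow_mul, ← zpow_add₀ hI,
    ← zpow_add₀ hI, ← zpow_add₀ hI, sub_eq_add_neg]
  norm_num

-- The form of `wght` that `decide` can evaluate.
lemma wght_eq_ite {n : ℕ} (x y : PV n) : wght x y = if phaseExp x y % 4 = 0 then 0 else 1 := by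
  simp only [wght, phase_eq_I_zpow, Complex.isPrimitiveRoot_I.zpow_eq_one_iff_dvd,
    Int.dvd_iff_emod_eq_zero, Nat.cast_ofNat]

lemma isOutcome_zero {n : ℕ} {S : Submodule F2 (PV n)}
    (h : ∀ x ∈ S, ∀ y ∈ S, wght x y = 0) : IsOutcome S 0 := fun x y => by
  simp [h x x.2 y y.2]

lemma exists_forall_eq_of_consistentOn {n : ℕ} (D : Set (Submodule F2 (PV n)))
    (f : (S : Submodule F2 (PV n)) → S → F2)
    (hf : ∀ S₁ ∈ D, ∀ S₂ ∈ D, ConsistentOn (f S₁) (f S₂)) :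
    ∃ g : PV n → F2, ∀ S ∈ D, ∀ x (hx : x ∈ S), f S ⟨x, hx⟩ = g x := by
  classical
  refine ⟨fun x => if h : ∃ S ∈ D, x ∈ S then f h.choose ⟨x, h.choose_spec.2⟩ else 0, ?_⟩
  intro S hS x hx
  have h : ∃ S ∈ D, x ∈ S := ⟨S, hS, hx⟩
  dsimp only
  rw [dif_pos h]
  exact hf S hS _ h.choose_spec.1 x hx _

lemma Finset.sum_comp_eq_zero_of_even_card_fiber {ι β R : Type*} [DecidableEq β] [Ring R]
    [CharP R 2] (s : Finset ι) (φ : ι → β) (h : ∀ b, Even #{i ∈ s | φ i = b}) (g : β → R) :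
    ∑ i ∈ s, g (φ i) = 0 := by
  rw [Finset.sum_comp]
  refine Finset.sum_eq_zero fun b _ => ?_
  rw [nsmul_eq_mul, (CharP.cast_eq_zero_iff R 2 _).mpr (even_iff_two_dvd.mp (h b)), zero_mul]

namespace Doily

def vec (a b c d : F2) : PV 2 := (![a, b], ![c, d])

def gen₁ : Fin 15 → PV 2 :=
  ![vec 0 0 0 1, vec 0 0 0 1, vec 0 0 0 1, vec 0 0 1 0, vec 0 0 1 0,
    vec 0 0 1 1, vec 0 0 1 1, vec 0 1 0 0, vec 0 1 0 0, vec 0 1 0 1,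
    vec 0 1 0 1, vec 0 1 1 0, vec 0 1 1 0, vec 0 1 1 1, vec 0 1 1 1]

def gen₂ : Fin 15 → PV 2 :=
  ![vec 0 0 1 0, vec 1 0 0 0, vec 1 0 1 0, vec 0 1 0 0, vec 0 1 0 1,
    vec 1 1 0 0, vec 1 1 0 1, vec 1 0 0 0, vec 1 0 1 0, vec 1 0 0 0,
    vec 1 0 1 0, vec 1 0 0 1, vec 1 0 1 1, vec 1 0 0 1, vec 1 0 1 1]

def plane (m : Fin 15) : Submodule F2 (PV 2) := Submodule.span F2 {gen₁ m, gen₂ m}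

lemma forall_mem_plane {m : Fin 15} {P : PV 2 → PV 2 → Prop}
    (h : ∀ a b c d : F2, P (a • gen₁ m + b • gen₂ m) (c • gen₁ m + d • gen₂ m)) :
    ∀ x ∈ plane m, ∀ y ∈ plane m, P x y := by
  intro x hx y hy
  obtain ⟨a, b, rfl⟩ := Submodule.mem_span_pair.mp hx
  obtain ⟨c, d, rfl⟩ := Submodule.mem_span_pair.mp hy
  exact h a b c d

lemma gen_linearIndependent : ∀ m : Fin 15, ∀ a b : F2,
    a • gen₁ m + b • gen₂ m = 0 → a = 0 ∧ b = 0 := by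
  decide

lemma symp_gen : ∀ m : Fin 15, ∀ a b c d : F2,
    symp (a • gen₁ m + b • gen₂ m) (c • gen₁ m + d • gen₂ m) = 0 := by
  decide

lemma plane_mem_Lset (m : Fin 15) : plane m ∈ Lset 2 2 := by
  refine ⟨forall_mem_plane (symp_gen m), ?_⟩
  have hli : LinearIndependent F2 ![gen₁ m, gen₂ m] :=
    LinearIndependent.pair_iff.mpr (gen_linearIndependent m)
  rw [plane, ← Matrix.range_cons_cons_empty, finrank_span_eq_card hli, Fintype.card_fin]

set_option synthInstance.maxSize 8000 in
lemma exists_plane_le_span : ∀ u v : PV 2, (∀ a b : F2, a • u + b • v = 0 → a = 0 ∧ b = 0) →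
    symp u v = 0 → ∃ m : Fin 15,
      (∃ a b : F2, a • u + b • v = gen₁ m) ∧ (∃ a b : F2, a • u + b • v = gen₂ m) := by
  decide

lemma eq_of_gen_mem_plane : ∀ i j : Fin 15,
    (∃ a b : F2, a • gen₁ j + b • gen₂ j = gen₁ i) →
    (∃ a b : F2, a • gen₁ j + b • gen₂ j = gen₂ i) → i = j := by
  decide

lemma plane_injective : Function.Injective plane := by
  intro i j h
  have hmem : ∀ x ∈ ({gen₁ i, gen₂ i} : Set (PV 2)), x ∈ plane j :=
    fun x hx => h ▸ Submodule.subset_span hx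
  exact eq_of_gen_mem_plane i j (Submodule.mem_span_pair.mp (hmem _ (by simp)))
    (Submodule.mem_span_pair.mp (hmem _ (by simp)))

lemma Lset_two_two_eq_range : Lset 2 2 = Set.range plane := by
  refine Set.Subset.antisymm ?_ (Set.range_subset_iff.mpr plane_mem_Lset)
  rintro S ⟨hiso, hfr⟩
  let b := Module.finBasisOfFinrankEq F2 S hfr
  have hb : LinearIndependent F2 ![b 0, b 1] := by
    convert b.linearIndependent
    funext i
    fin_cases i <;> rfl
  have hli : ∀ a c : F2, a • (b 0 : PV 2) + c • (b 1 : PV 2) = 0 → a = 0 ∧ c = 0 :=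
    fun a c h => LinearIndependent.pair_iff.mp hb a c (Subtype.ext h)
  obtain ⟨m, ⟨a₁, c₁, h₁⟩, ⟨a₂, c₂, h₂⟩⟩ :=
    exists_plane_le_span _ _ hli (hiso _ (b 0).2 _ (b 1).2)
  have hle : plane m ≤ S := by
    rw [plane, Submodule.span_le, Set.insert_subset_iff, Set.singleton_subset_iff, ← h₁, ← h₂]
    exact ⟨(a₁ • b 0 + c₁ • b 1).2, (a₂ • b 0 + c₂ • b 1).2⟩
  exact ⟨m, Submodule.eq_of_le_of_finrank_eq hle ((plane_mem_Lset m).2.trans hfr.symm)⟩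

lemma card_Lset_two_two : Nat.card (Lset 2 2) = 15 := by
  rw [Lset_two_two_eq_range, Nat.card_range_of_injective plane_injective, Nat.card_eq_fintype_card,
    Fintype.card_fin]

def goodPlanes : Finset (Fin 15) := {5, 12, 13}ᶜ

lemma wght_gen_eq_zero : ∀ m ∈ goodPlanes, ∀ a b c d : F2,
    wght (a • gen₁ m + b • gen₂ m) (c • gen₁ m + d • gen₂ m) = 0 := by
  simp only [wght_eq_ite]
  decide

lemma exists_consistent_twelve : ∃ D ⊆ Lset 2 2, Nat.card D = 12 ∧
    ∃ f : (S : Submodule F2 (PV 2)) → (S → F2),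
      (∀ S ∈ D, IsOutcome S (f S)) ∧ (∀ S₁ ∈ D, ∀ S₂ ∈ D, ConsistentOn (f S₁) (f S₂)) := by
  refine ⟨plane '' goodPlanes, ?_, ?_, fun _ => 0, ?_, fun _ _ _ _ _ _ _ => rfl⟩
  · rw [Lset_two_two_eq_range]
    exact Set.image_subset_range _ _
  · rw [Nat.card_image_of_injective plane_injective, Nat.card_eq_card_toFinset,
      Finset.toFinset_coe]
    rfl
  · rintro S ⟨m, hm, rfl⟩
    exact isOutcome_zero (forall_mem_plane (wght_gen_eq_zero m hm))

def linePt (m : Fin 15) : Fin 3 → PV 2 := ![gen₁ m, gen₂ m, gen₁ m + gen₂ m]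

/- The 10 grids of `GQ(2,2)`: six lines through nine points, each point on exactly two of them
(as in the Mermin–Peres magic square). -/
def grid : Fin 10 → Finset (Fin 15) :=
  ![{0, 1, 3, 5, 7, 11}, {0, 1, 4, 6, 9, 13}, {0, 2, 3, 6, 8, 12}, {0, 2, 4, 5, 10, 14},
    {1, 2, 7, 8, 13, 14}, {1, 2, 9, 10, 11, 12}, {3, 4, 7, 9, 12, 14}, {3, 4, 8, 10, 11, 13},
    {5, 6, 7, 8, 9, 10}, {5, 6, 11, 12, 13, 14}]

lemma even_card_grid_fiber : ∀ (k : Fin 10) (x : PV 2),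
    Even #{q ∈ grid k ×ˢ univ | linePt q.1 q.2 = x} := by
  decide

lemma sum_wght_grid : ∀ k : Fin 10, ∑ m ∈ grid k, wght (gen₁ m) (gen₂ m) = 1 := by
  simp only [wght_eq_ite]
  decide

lemma exists_grid_avoiding : ∀ i j : Fin 15, ∃ k : Fin 10, i ∉ grid k ∧ j ∉ grid k := by
  decide

lemma exists_grid_subset {T : Finset (Fin 15)} (hT : 13 ≤ #T) : ∃ k, grid k ⊆ T := by
  have hcompl : #Tᶜ ≤ 2 := by
    rw [card_compl, Fintype.card_fin]
    omega
  obtain ⟨P, hTP, hP⟩ := Finset.exists_superset_card_eq hcompl (by simp)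
  obtain ⟨i, j, -, rfl⟩ := Finset.card_eq_two.mp hP
  obtain ⟨k, hi, hj⟩ := exists_grid_avoiding i j
  refine ⟨k, fun m hm => ?_⟩
  by_contra hmT
  rcases Finset.mem_insert.mp (hTP (mem_compl.mpr hmT)) with rfl | h
  · exact hi hm
  · exact hj (mem_singleton.mp h ▸ hm)

lemma sum_linePt_eq_wght {m : Fin 15} {f : plane m → F2} (hf : IsOutcome (plane m) f)
    {g : PV 2 → F2} (hg : ∀ x (hx : x ∈ plane m), f ⟨x, hx⟩ = g x) :
    ∑ p, g (linePt m p) = wght (gen₁ m) (gen₂ m) := by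
  have h₁ : gen₁ m ∈ plane m := Submodule.subset_span (by simp)
  have h₂ : gen₂ m ∈ plane m := Submodule.subset_span (by simp)
  have h : g (gen₁ m + gen₂ m) = g (gen₁ m) + g (gen₂ m) + wght (gen₁ m) (gen₂ m) := by
    rw [← hg _ h₁, ← hg _ h₂, ← hg _ (add_mem h₁ h₂)]
    exact hf ⟨_, h₁⟩ ⟨_, h₂⟩
  simp only [Fin.sum_univ_three, linePt, Matrix.cons_val_zero, Matrix.cons_val_one,
    Matrix.cons_val_two, Matrix.tail_cons, Matrix.head_cons]
  rw [h, ← add_assoc, CharTwo.add_self_eq_zero, zero_add]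

lemma sum_grid_linePt (g : PV 2 → F2) (k : Fin 10) :
    ∑ m ∈ grid k, ∑ p, g (linePt m p) = 0 := by
  rw [← Finset.sum_product (f := fun q => g (linePt q.1 q.2))]
  exact Finset.sum_comp_eq_zero_of_even_card_fiber _ _ (even_card_grid_fiber k) g

lemma card_le_twelve {D : Set (Submodule F2 (PV 2))} (hD : D ⊆ Lset 2 2)
    (f : (S : Submodule F2 (PV 2)) → S → F2) (hfo : ∀ S ∈ D, IsOutcome S (f S))
    (hfc : ∀ S₁ ∈ D, ∀ S₂ ∈ D, ConsistentOn (f S₁) (f S₂)) : Nat.card D ≤ 12 := by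
  classical
  obtain ⟨g, hg⟩ := exists_forall_eq_of_consistentOn D f hfc
  set T : Finset (Fin 15) := {m | plane m ∈ D}
  have hcard : Nat.card D = #T := by
    rw [← Nat.card_preimage_of_injective plane_injective (Lset_two_two_eq_range ▸ hD),
      Nat.card_eq_card_toFinset]
    congr
    ext m
    simp [T]
  by_contra! h
  obtain ⟨k, hk⟩ := exists_grid_subset (hcard ▸ h)
  have hline : ∀ m ∈ grid k, ∑ p, g (linePt m p) = wght (gen₁ m) (gen₂ m) := fun m hm =>
    have hmD : plane m ∈ D := (mem_filter.mp (hk hm)).2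
    sum_linePt_eq_wght (hfo _ hmD) (hg _ hmD)
  have := sum_grid_linePt g k
  rw [Finset.sum_congr rfl hline, sum_wght_grid] at this
  exact one_ne_zero this

end Doily

/-- **`Pval(L^2) = 4/5`.** Among the 15 maximal (2-dimensional) isotropic subspaces of
`F2^4`, the maximum size of a subset admitting a pairwise consistent family of outcomes is
exactly 12. -/
theorem pval_L2 :
    Nat.card (Lset 2 2) = 15 ∧
    (∃ D ⊆ Lset 2 2, Nat.card D = 12 ∧
        ∃ f : (S : Submodule F2 (PV 2)) → (S → F2),
          (∀ S ∈ D, IsOutcome S (f S)) ∧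
          (∀ S₁ ∈ D, ∀ S₂ ∈ D, ConsistentOn (f S₁) (f S₂))) ∧
    (∀ D ⊆ Lset 2 2,
        (∃ f : (S : Submodule F2 (PV 2)) → (S → F2),
            (∀ S ∈ D, IsOutcome S (f S)) ∧
            (∀ S₁ ∈ D, ∀ S₂ ∈ D, ConsistentOn (f S₁) (f S₂))) →
        Nat.card D ≤ 12) :=
  ⟨Doily.card_Lset_two_two, Doily.exists_consistent_twelve,
    fun _ hD ⟨f, hfo, hfc⟩ => Doily.card_le_twelve hD f hfo hfc⟩
end

section
/- Let n be even, n ≥ 2, and fix a family (f_x)_{x∈L^n_n} of outcomes on the maximal isotropic subspaces of (ZMod 2)^{2n}. Let Q be the number of ordered pairs (x,y) ∈ L^n_n × L^n_n with dim(x∩y) = n/2, and let s be the fraction of such pairs for which f_x and f_y are consistent. Let T_n be the number of contradiction triangles: triples (w,x,y) with w ∈ L^n_1, x,y ∈ L^n_n, w ⊆ x∩y, dim(x∩y)=n/2, and f_x(v) ≠ f_y(v) for the nonzero vector v of w. Then T_n ≥ (1 − s) · Q · 2^{n/2 − 1}. -/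
open Finset

/-- Ordered pairs of maximal isotropic subspaces of `F2^{2n}` intersecting in dim `n/2`. -/
def halfPairs (n : ℕ) : Set (Submodule F2 (PV n) × Submodule F2 (PV n)) :=
  {p | p.1 ∈ Lset n n ∧ p.2 ∈ Lset n n ∧ Module.finrank F2 ↥(p.1 ⊓ p.2) = n / 2}

/-- The pairs in `halfPairs` on which the assigned outcomes are consistent. -/
def consistentHalfPairs (n : ℕ) (f : (S : Submodule F2 (PV n)) → (S → F2)) :
    Set (Submodule F2 (PV n) × Submodule F2 (PV n)) :=
  {p | p ∈ halfPairs n ∧ ConsistentOn (f p.1) (f p.2)}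

/-- Contradiction triangles: triples `(w,x,y)` with `w ∈ L^n_1`, `x,y ∈ L^n_n`,
`w ⊆ x ∩ y`, `dim(x ∩ y) = n/2`, and `f_x(v) ≠ f_y(v)` for the nonzero vector `v` of `w`. -/
def contradictionTriangles (n : ℕ) (f : (S : Submodule F2 (PV n)) → (S → F2)) :
    Set (Submodule F2 (PV n) × Submodule F2 (PV n) × Submodule F2 (PV n)) :=
  {t | t.1 ∈ Lset n 1 ∧ t.2.1 ∈ Lset n n ∧ t.2.2 ∈ Lset n n ∧
    t.1 ≤ t.2.1 ⊓ t.2.2 ∧ Module.finrank F2 ↥(t.2.1 ⊓ t.2.2) = n / 2 ∧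
    ∃ (h1 : t.1 ≤ t.2.1) (h2 : t.1 ≤ t.2.2), ∃ v, ∃ (hv : v ∈ t.1), v ≠ 0 ∧
      f t.2.1 ⟨v, h1 hv⟩ ≠ f t.2.2 ⟨v, h2 hv⟩}

/-!
If the outcomes `f_x` and `f_y` of two maximal isotropic subspaces disagree somewhere on
`x ∩ y`, then `f_x + f_y` is a nonzero linear functional on `x ∩ y`: the cocycle term
`w(u, v)` occurs in both outcome laws and cancels in characteristic two. Hence exactly half of
the `2^{n/2}` vectors of `x ∩ y` are points of disagreement. Each of them is nonzero and spans a
line `w ⊆ x ∩ y`, so `(w, x, y)` is a contradiction triangle, and distinct pairs `(x, y)` or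
distinct vectors give distinct triangles: at least `2^{n/2 - 1}` triangles per inconsistent
pair.
-/

open Submodule

lemma ZMod.two_ne_zero_iff_eq_one : ∀ a : ZMod 2, a ≠ 0 ↔ a = 1 := by decide

lemma ZMod.two_add_ne_zero_iff : ∀ a b : ZMod 2, a + b ≠ 0 ↔ a ≠ b := by decide

lemma AddMonoidHom.two_mul_card_ne_zero {G : Type*} [AddGroup G] [Finite G]
    (φ : G →+ ZMod 2) (hφ : φ ≠ 0) : 2 * Nat.card {u // φ u ≠ 0} = Nat.card G := by
  obtain ⟨u₀, hu₀⟩ := DFunLike.ne_iff.mp hφ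
  have hφu₀ : φ u₀ = 1 := (ZMod.two_ne_zero_iff_eq_one _).mp hu₀
  have htranslate : {u // φ u ≠ 0} ≃ {u // φ u = 0} :=
    (Equiv.addRight u₀).subtypeEquiv fun u => by
      rw [Equiv.coe_addRight, map_add, hφu₀]
      generalize φ u = a
      revert a; decide
  rw [two_mul]
  nth_rw 1 [Nat.card_congr htranslate]
  rw [← Nat.card_sum]
  exact Nat.card_congr (Equiv.sumCompl _)

lemma wght_zero_zero {n : ℕ} : wght (0 : PV n) 0 = 0 := by
  simp [wght, phase, dotZ, liftZ]

lemma IsOutcome.map_zero {n : ℕ} {S : Submodule F2 (PV n)} {f : S → F2}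
    (hf : IsOutcome S f) : f 0 = 0 := by
  have h := hf 0 0
  rw [add_zero, ZeroMemClass.coe_zero, wght_zero_zero, add_zero] at h
  exact h.trans (CharTwo.add_self_eq_zero _)

section OutcomeDiff

variable {n : ℕ} (f : (S : Submodule F2 (PV n)) → (S → F2)) (x y : Submodule F2 (PV n))

def outcomeDiff (u : ↥(x ⊓ y)) : F2 :=
  f x (inclusion inf_le_left u) + f y (inclusion inf_le_right u)

variable {f x y}

lemma outcomeDiff_add (hfx : IsOutcome x (f x)) (hfy : IsOutcome y (f y)) (u v : ↥(x ⊓ y)) :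
    outcomeDiff f x y (u + v) = outcomeDiff f x y u + outcomeDiff f x y v := by
  simp only [outcomeDiff, map_add]
  rw [hfx, hfy]
  simp only [coe_inclusion]
  linear_combination CharTwo.add_self_eq_zero (wght (u : PV n) v)

lemma outcomeDiff_ne_zero_iff (u : ↥(x ⊓ y)) :
    outcomeDiff f x y u ≠ 0 ↔ f x (inclusion inf_le_left u) ≠ f y (inclusion inf_le_right u) :=
  ZMod.two_add_ne_zero_iff _ _

lemma card_outcomeDiff_ne_zero (hfx : IsOutcome x (f x)) (hfy : IsOutcome y (f y))
    (hnc : ¬ ConsistentOn (f x) (f y)) :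
    Nat.card {u // outcomeDiff f x y u ≠ 0} = 2 ^ (Module.finrank F2 ↥(x ⊓ y) - 1) := by
  let φ : ↥(x ⊓ y) →+ F2 := AddMonoidHom.mk' _ (outcomeDiff_add hfx hfy)
  have hφ : φ ≠ 0 := by
    simp only [ConsistentOn, not_forall] at hnc
    obtain ⟨v, hvx, hvy, hne⟩ := hnc
    refine DFunLike.ne_iff.mpr ⟨⟨v, mem_inf.mpr ⟨hvx, hvy⟩⟩, ?_⟩
    exact (outcomeDiff_ne_zero_iff _).mpr hne
  have hhalf : 2 * Nat.card {u // φ u ≠ 0} = 2 ^ Module.finrank F2 ↥(x ⊓ y) := by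
    rw [φ.two_mul_card_ne_zero hφ, Module.natCard_eq_pow_finrank (K := F2), Nat.card_zmod]
  change 2 * Nat.card {u // outcomeDiff f x y u ≠ 0} = _ at hhalf
  generalize Module.finrank F2 ↥(x ⊓ y) = d at hhalf ⊢
  cases d with
  | zero => omega
  | succ d => rw [pow_succ] at hhalf; rw [Nat.add_sub_cancel]; omega

end OutcomeDiff

lemma span_singleton_injective_zmod_two {M : Type*} [AddCommGroup M] [Module (ZMod 2) M] :
    Function.Injective fun v : M => span (ZMod 2) {v} := by
  intro a b hab
  obtain ⟨z, rfl⟩ := (span_singleton_eq_span_singleton.mp hab)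
  rw [Subsingleton.elim z 1, one_smul]

lemma ne_zero_of_outcome_ne {n : ℕ} {x y : Submodule F2 (PV n)} {fx : x → F2} {fy : y → F2}
    (hfx : IsOutcome x fx) (hfy : IsOutcome y fy) {v : PV n} (hvx : v ∈ x) (hvy : v ∈ y)
    (hne : fx ⟨v, hvx⟩ ≠ fy ⟨v, hvy⟩) : v ≠ 0 := by
  rintro rfl
  exact hne (hfx.map_zero.trans hfy.map_zero.symm)

lemma span_mem_contradictionTriangles {n : ℕ} {f : (S : Submodule F2 (PV n)) → (S → F2)}
    {x y : Submodule F2 (PV n)} (hx : x ∈ Lset n n) (hy : y ∈ Lset n n)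
    (hd : Module.finrank F2 ↥(x ⊓ y) = n / 2) {v : PV n} (hv : v ≠ 0)
    (hvx : v ∈ x) (hvy : v ∈ y) (hne : f x ⟨v, hvx⟩ ≠ f y ⟨v, hvy⟩) :
    (span F2 {v}, x, y) ∈ contradictionTriangles n f := by
  have hsx : span F2 {v} ≤ x := (span_singleton_le_iff_mem v x).mpr hvx
  have hsy : span F2 {v} ≤ y := (span_singleton_le_iff_mem v y).mpr hvy
  exact ⟨⟨fun a ha b hb => hx.1 a (hsx ha) b (hsx hb), finrank_span_singleton hv⟩, hx, hy,
    le_inf hsx hsy, hd, hsx, hsy, v, mem_span_singleton_self v, hv, hne⟩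

lemma card_inconsistent_mul_le_card_contradictionTriangles {n : ℕ}
    {f : (S : Submodule F2 (PV n)) → (S → F2)} (hf : ∀ S ∈ Lset n n, IsOutcome S (f S)) :
    Nat.card ↥(halfPairs n \ consistentHalfPairs n f) * 2 ^ (n / 2 - 1) ≤
      Nat.card (contradictionTriangles n f) := by
  set I := halfPairs n \ consistentHalfPairs n f
  have hI : ∀ p ∈ I, p.1 ∈ Lset n n ∧ p.2 ∈ Lset n n ∧
      Module.finrank F2 ↥(p.1 ⊓ p.2) = n / 2 ∧ ¬ ConsistentOn (f p.1) (f p.2) :=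
    fun p ⟨⟨hx, hy, hd⟩, hc⟩ => ⟨hx, hy, hd, fun h => hc ⟨⟨hx, hy, hd⟩, h⟩⟩
  let D (p : I) := {u : ↥(p.1.1 ⊓ p.1.2) // outcomeDiff f p.1.1 p.1.2 u ≠ 0}
  have hD (p : I) : Nat.card (D p) = 2 ^ (n / 2 - 1) := by
    obtain ⟨hx, hy, hd, hc⟩ := hI p p.2
    rw [← hd]
    exact card_outcomeDiff_ne_zero (hf _ hx) (hf _ hy) hc
  let Φ : (Σ p : I, D p) → contradictionTriangles n f := fun ⟨⟨(x, y), hp⟩, u, hu⟩ =>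
    ⟨(span F2 {(u : PV n)}, x, y), by
      obtain ⟨hx, hy, hd, -⟩ := hI _ hp
      have hne := (outcomeDiff_ne_zero_iff u).mp hu
      exact span_mem_contradictionTriangles hx hy hd
        (ne_zero_of_outcome_ne (hf x hx) (hf y hy) _ _ hne) _ _ hne⟩
  have hΦ : Function.Injective Φ := by
    rintro ⟨⟨⟨x, y⟩, hp⟩, u, hu⟩ ⟨⟨⟨x', y'⟩, hq⟩, u', hu'⟩ h
    simp only [Φ, Subtype.mk.injEq, Prod.mk.injEq] at h
    obtain ⟨hspan, rfl, rfl⟩ := h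
    obtain rfl := Subtype.ext (span_singleton_injective_zmod_two hspan)
    rfl
  have : Fintype I := Fintype.ofFinite I
  calc Nat.card I * 2 ^ (n / 2 - 1) = Nat.card (Σ p : I, D p) := by
        simp [Nat.card_sigma, hD, Nat.card_eq_fintype_card]
    _ ≤ Nat.card (contradictionTriangles n f) := Nat.card_le_card_of_injective Φ hΦ

/-- **Lower bound on contradiction triangles.** `T_n ≥ (1 − s)·Q·2^{n/2−1}`, where `Q` is the
number of ordered pairs of maximal isotropic subspaces intersecting in dimension `n/2`, and
`s` is the fraction of such pairs with consistent outcomes. -/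
theorem contradiction_triangle_count :
    ∀ n : ℕ, Even n → 2 ≤ n →
      ∀ f : (S : Submodule F2 (PV n)) → (S → F2),
        (∀ S ∈ Lset n n, IsOutcome S (f S)) →
        (Nat.card (contradictionTriangles n f) : ℝ) ≥
          (1 - (Nat.card (consistentHalfPairs n f) : ℝ) / (Nat.card (halfPairs n) : ℝ)) *
            (Nat.card (halfPairs n) : ℝ) * 2 ^ (n / 2 - 1) := by
  intro n _ _ f hf
  have hsub : consistentHalfPairs n f ⊆ halfPairs n := fun p hp => hp.1
  have hCQ : Nat.card (consistentHalfPairs n f) ≤ Nat.card (halfPairs n) :=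
    Nat.card_mono (Set.toFinite _) hsub
  have hdiff : Nat.card ↥(halfPairs n \ consistentHalfPairs n f) =
      Nat.card (halfPairs n) - Nat.card (consistentHalfPairs n f) := by
    simp only [Nat.card_coe_set_eq, Set.ncard_sdiff hsub]
  have hcount := card_inconsistent_mul_le_card_contradictionTriangles hf
  rw [hdiff] at hcount
  have hrhs : (1 - (Nat.card (consistentHalfPairs n f) : ℝ) / (Nat.card (halfPairs n) : ℝ)) *
      (Nat.card (halfPairs n) : ℝ) =
      ((Nat.card (halfPairs n) - Nat.card (consistentHalfPairs n f) : ℕ) : ℝ) := by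
    rcases eq_or_ne (Nat.card (halfPairs n)) 0 with hQ | hQ
    · simp [hQ]
    · rw [Nat.cast_sub hCQ, sub_mul, one_mul, div_mul_cancel₀ _ (Nat.cast_ne_zero.mpr hQ)]
  rw [ge_iff_le, hrhs]
  exact_mod_cast hcount
end

section
/- For every n ≥ 1 and 0 ≤ k ≤ n, the number of k-dimensional isotropic subspaces of (ZMod 2)^{2n} equals ∏_{i=0}^{k−1} (2^{2n−i} − 2^i)/(2^k − 2^i). -/
open Finset

open Module Submodule

/-! Count isotropic frames, i.e. linearly independent tuples of pairwise orthogonal vectors,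
in two ways. A frame `s` of length `i` extends exactly by the vectors of `(span s)ᗮ \ span s`;
as the form is nondegenerate and alternating, `span s ≤ (span s)ᗮ` with dimensions `i` and
`2n - i`, so there are `2^(2n-i) - 2^i` extensions. On the other hand, a `k`-dimensional
isotropic subspace is spanned by exactly `∏_{i<k} (2^k - 2^i)` frames, namely its ordered
bases. -/

lemma Submodule.natCard_sdiff {K V : Type*} [Field K] [Fintype K] [AddCommGroup V] [Module K V]
    [Finite V] {W O : Submodule K V} (h : W ≤ O) :
    Nat.card ↥((O : Set V) \ W) =
      Fintype.card K ^ finrank K O - Fintype.card K ^ finrank K W := by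
  rw [Nat.card_coe_set_eq, Set.ncard_sdiff (SetLike.coe_subset_coe.mpr h), ← Nat.card_coe_set_eq,
    ← Nat.card_coe_set_eq, SetLike.coe_sort_coe, SetLike.coe_sort_coe,
    natCard_eq_pow_finrank (K := K) (V := O), natCard_eq_pow_finrank (K := K) (V := W),
    Nat.card_eq_fintype_card]

namespace LinearMap.BilinForm

variable {K V : Type*} [Field K] [AddCommGroup V] [Module K V] (B : LinearMap.BilinForm K V)

abbrev IsotropicFrame (k : ℕ) : Type _ :=
  {s : Fin k → V // LinearIndependent K s ∧ ∀ i j, B (s i) (s j) = 0}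

def isotropicSubmodules (k : ℕ) : Set (Submodule K V) :=
  {W | (∀ x ∈ W, ∀ y ∈ W, B x y = 0) ∧ finrank K W = k}

variable {B}

lemma mem_isotropicSubmodules {k : ℕ} {W : Submodule K V} :
    W ∈ B.isotropicSubmodules k ↔ (∀ x ∈ W, ∀ y ∈ W, B x y = 0) ∧ finrank K W = k :=
  Iff.rfl

lemma mem_orthogonal_span_iff {s : Set V} {x : V} :
    x ∈ B.orthogonal (span K s) ↔ ∀ y ∈ s, B y x = 0 :=
  ⟨fun h y hy => h y (subset_span hy),
    fun h _ hy => (span_le.mpr h : span K s ≤ LinearMap.ker (B.flip x)) hy⟩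

lemma span_le_orthogonal_span {s : Set V} (hs : ∀ x ∈ s, ∀ y ∈ s, B x y = 0) :
    span K s ≤ B.orthogonal (span K s) :=
  span_le.mpr fun y hy => mem_orthogonal_span_iff.mpr fun x hx => hs x hx y hy

namespace IsotropicFrame

variable {k : ℕ} (s : B.IsotropicFrame k)

lemma span_le_orthogonal :
    span K (Set.range s.1) ≤ B.orthogonal (span K (Set.range s.1)) :=
  span_le_orthogonal_span <| by rintro _ ⟨i, rfl⟩ _ ⟨j, rfl⟩; exact s.2.2 i j

lemma finrank_span : finrank K (span K (Set.range s.1)) = k := by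
  rw [finrank_span_eq_card s.2.1, Fintype.card_fin]

lemma span_mem_isotropicSubmodules : span K (Set.range s.1) ∈ B.isotropicSubmodules k :=
  ⟨fun _ hx _ hy => s.span_le_orthogonal hy _ hx, s.finrank_span⟩

def toIsotropicSubmodule : B.isotropicSubmodules k :=
  ⟨span K (Set.range s.1), s.span_mem_isotropicSubmodules⟩

end IsotropicFrame

def isotropicFrameSuccEquiv (hB : B.IsAlt) (k : ℕ) :
    B.IsotropicFrame (k + 1) ≃ Σ s : B.IsotropicFrame k,
      ↥((B.orthogonal (span K (Set.range s.1)) : Set V) \ span K (Set.range s.1)) where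
  toFun s := ⟨⟨Fin.tail s.1, (linearIndependent_finSucc.mp s.2.1).1,
      fun i j => s.2.2 i.succ j.succ⟩,
    ⟨s.1 0, mem_orthogonal_span_iff.mpr (by rintro _ ⟨j, rfl⟩; exact s.2.2 j.succ 0),
      (linearIndependent_finSucc.mp s.2.1).2⟩⟩
  invFun p := ⟨Fin.cons p.2.1 p.1.1, by
    obtain ⟨⟨s, hs, hss⟩, u, hu, hus⟩ := p
    have hsu : ∀ j, B (s j) u = 0 := fun j => mem_orthogonal_span_iff.mp hu _ ⟨j, rfl⟩
    refine ⟨linearIndependent_finCons.mpr ⟨hs, hus⟩, fun i j => ?_⟩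
    cases i using Fin.cases <;> cases j using Fin.cases
    · exact hB u
    · exact hB.isRefl _ _ (hsu _)
    · exact hsu _
    · exact hss _ _⟩
  left_inv s := Subtype.ext (Fin.cons_self_tail s.1)
  right_inv := by
    rintro ⟨s, u⟩
    refine Sigma.ext (by simp) ((Subtype.heq_iff_coe_eq fun _ => by simp).mpr (by simp))

section Finite

variable [Fintype K] [Finite V]

local notation "q" => Fintype.card K

theorem card_isotropicFrame (hB : B.Nondegenerate) (hA : B.IsAlt) (k : ℕ) :
    Nat.card (B.IsotropicFrame k) = ∏ i ∈ Finset.range k, (q ^ (finrank K V - i) - q ^ i) := by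
  induction k with
  | zero => simp
  | succ k ih =>
    have card_extensions (s : B.IsotropicFrame k) :
        Nat.card ↥((B.orthogonal (span K (Set.range s.1)) : Set V) \ span K (Set.range s.1)) =
          q ^ (finrank K V - k) - q ^ k := by
      rw [natCard_sdiff s.span_le_orthogonal, finrank_orthogonal hB, s.finrank_span]
    have := Fintype.ofFinite (B.IsotropicFrame k)
    rw [Nat.card_congr (isotropicFrameSuccEquiv hA k), Nat.card_sigma,
      sum_congr rfl fun s _ => card_extensions s, sum_const, card_univ,
      ← Nat.card_eq_fintype_card, ih, smul_eq_mul, prod_range_succ]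

def isotropicFrameFiberEquiv {k : ℕ} (W : B.isotropicSubmodules k) :
    {s : B.IsotropicFrame k // s.toIsotropicSubmodule = W} ≃
      {t : Fin k → W.1 // LinearIndependent K t} where
  toFun s := ⟨fun i => ⟨s.1.1 i, (congrArg Subtype.val s.2).le (subset_span ⟨i, rfl⟩)⟩,
    .of_comp W.1.subtype s.1.2.1⟩
  invFun t :=
    have ht : LinearIndependent K (W.1.subtype ∘ t.1) := t.2.map' _ (ker_subtype _)
    ⟨⟨W.1.subtype ∘ t.1, ht,
      fun i j => (mem_isotropicSubmodules.mp W.2).1 _ (t.1 i).2 _ (t.1 j).2⟩,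
      Subtype.ext <| eq_of_le_of_finrank_le
        (span_le.mpr (Set.range_subset_iff.mpr fun i => (t.1 i).2))
        ((mem_isotropicSubmodules.mp W.2).2.trans
          ((finrank_span_eq_card ht).trans (Fintype.card_fin k)).symm).le⟩
  left_inv _ := rfl
  right_inv _ := rfl

theorem card_isotropicFrame_eq_card_mul (k : ℕ) :
    Nat.card (B.IsotropicFrame k) =
      Nat.card (B.isotropicSubmodules k) * ∏ i ∈ Finset.range k, (q ^ k - q ^ i) := by
  have card_fiber (W : B.isotropicSubmodules k) :
      Nat.card {s : B.IsotropicFrame k // s.toIsotropicSubmodule = W} =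
        ∏ i ∈ Finset.range k, (q ^ k - q ^ i) := by
    have hW := (mem_isotropicSubmodules.mp W.2).2
    rw [Nat.card_congr (isotropicFrameFiberEquiv W), card_linearIndependent hW.ge, hW,
      Fin.prod_univ_eq_prod_range (fun i => q ^ k - q ^ i)]
  have := Fintype.ofFinite (B.isotropicSubmodules k)
  rw [← Nat.card_congr (Equiv.sigmaFiberEquiv IsotropicFrame.toIsotropicSubmodule),
    Nat.card_sigma, sum_congr rfl fun W _ => card_fiber W, sum_const, card_univ, smul_eq_mul,
    Nat.card_eq_fintype_card]

theorem card_isotropicSubmodules (hB : B.Nondegenerate) (hA : B.IsAlt) {k : ℕ}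
    (hk : 2 * k ≤ finrank K V) :
    (Nat.card (B.isotropicSubmodules k) : ℚ) =
      ∏ i ∈ Finset.range k,
        ((q : ℚ) ^ (finrank K V - i) - q ^ i) / ((q : ℚ) ^ k - q ^ i) := by
  have hq : 1 < q := Fintype.one_lt_card
  have cast_pow_sub {a b : ℕ} (hab : a ≤ b) :
      ((q ^ b - q ^ a : ℕ) : ℚ) = (q : ℚ) ^ b - q ^ a := by
    rw [Nat.cast_sub (Nat.pow_le_pow_right hq.le hab), Nat.cast_pow, Nat.cast_pow]
  have hcount := congrArg (Nat.cast : ℕ → ℚ)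
    ((card_isotropicFrame hB hA k).symm.trans (card_isotropicFrame_eq_card_mul k))
  simp only [Nat.cast_mul, Nat.cast_prod] at hcount
  rw [prod_congr rfl fun i hi => cast_pow_sub (by have := Finset.mem_range.mp hi; omega),
    prod_congr rfl fun i hi => cast_pow_sub (Finset.mem_range.mp hi).le] at hcount
  have hden : ∏ i ∈ Finset.range k, ((q : ℚ) ^ k - q ^ i) ≠ 0 :=
    prod_ne_zero_iff.mpr fun i hi => sub_ne_zero.mpr
      (pow_lt_pow_right₀ (by exact_mod_cast hq) (Finset.mem_range.mp hi)).ne'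
  rw [prod_div_distrib, eq_div_iff hden, hcount]

end Finite

end LinearMap.BilinForm

def sympB (n : ℕ) : LinearMap.BilinForm F2 (PV n) :=
  LinearMap.mk₂ F2 symp
    (fun a a' b => by
      simp only [symp, Prod.fst_add, Prod.snd_add, Pi.add_apply, add_mul, sum_add_distrib]; ring)
    (fun c a b => by
      simp only [symp, Prod.smul_fst, Prod.smul_snd, Pi.smul_apply, smul_eq_mul, mul_sum, mul_add,
        mul_assoc])
    (fun a b b' => by
      simp only [symp, Prod.fst_add, Prod.snd_add, Pi.add_apply, mul_add, sum_add_distrib]; ring)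
    (fun c a b => by
      simp only [symp, Prod.smul_fst, Prod.smul_snd, Pi.smul_apply, smul_eq_mul, mul_sum, mul_add,
        mul_left_comm])

lemma sympB_apply {n : ℕ} (a b : PV n) : sympB n a b = symp a b := rfl

lemma sympB_isAlt (n : ℕ) : (sympB n).IsAlt := fun a => by
  simp only [sympB_apply, symp, mul_comm (a.2 _)]
  exact CharTwo.add_self_eq_zero _

lemma sympB_nondegenerate (n : ℕ) : (sympB n).Nondegenerate := by
  refine LinearMap.BilinForm.Nondegenerate.ofSeparatingLeft fun a ha => ?_
  have h1 (i : Fin n) : a.1 i = 0 := by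
    simpa [sympB_apply, symp, Pi.single_apply] using ha (0, Pi.single i 1)
  have h2 (i : Fin n) : a.2 i = 0 := by
    simpa [sympB_apply, symp, Pi.single_apply] using ha (Pi.single i 1, 0)
  ext i <;> simp [h1, h2]

lemma Lset_eq_isotropicSubmodules (n k : ℕ) : Lset n k = (sympB n).isotropicSubmodules k := rfl

lemma finrank_PV (n : ℕ) : finrank F2 (PV n) = 2 * n := by
  simp [finrank_prod, two_mul]

/-- The number of `k`-dimensional isotropic subspaces of `F2^{2n}` equals
`∏_{i=0}^{k−1} (2^{2n−i} − 2^i)/(2^k − 2^i)`. -/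
theorem card_Lset_eq :
    ∀ n : ℕ, 1 ≤ n → ∀ k : ℕ, k ≤ n →
      (Nat.card (Lset n k) : ℚ) =
        ∏ i ∈ Finset.range k,
          ((2 : ℚ) ^ (2 * n - i) - 2 ^ i) / ((2 : ℚ) ^ k - 2 ^ i) := by
  intro n _ k hk
  have := (sympB n).card_isotropicSubmodules (sympB_nondegenerate n) (sympB_isAlt n)
    (k := k) (by rw [finrank_PV]; omega)
  rwa [finrank_PV, ZMod.card, Nat.cast_ofNat, ← Lset_eq_isotropicSubmodules] at this
end

section
/- For n > 8, the largest eigenvalue Δ of the adjacency matrix of the bipartite containment graph B_{n,2} satisfies Δ² ≥ 2^{3(n−3) + (n−2)(n−3)/2}. -/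
open Finset

open scoped Classical

noncomputable instance {n : ℕ} : Fintype (Submodule F2 (PV n)) := by
  have : Finite (Submodule F2 (PV n)) :=
    Finite.of_injective (fun S => (S : Set (PV n))) SetLike.coe_injective
  exact Fintype.ofFinite _

/-- Adjacency matrix (over `ℝ`) of the graph with adjacency relation `Adj`. -/
noncomputable def adjMat {V : Type*} [Fintype V] (Adj : V → V → Prop) : Matrix V V ℝ :=
  fun x y => if Adj x y then 1 else 0

/-- The set of eigenvalues of a matrix. -/
def eigSet {V : Type*} [Fintype V] (A : Matrix V V ℝ) : Set ℝ :=
  {μ | ∃ v : V → ℝ, v ≠ 0 ∧ A.mulVec v = μ • v}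

/-- The largest eigenvalue. -/
noncomputable def maxEig {V : Type*} [Fintype V] (A : Matrix V V ℝ) : ℝ :=
  sSup (eigSet A)

/-- The spectral parameter: the second largest element of `{|μ| : μ ∈ Spec(A)}`. -/
noncomputable def specParam {V : Type*} [Fintype V] (A : Matrix V V ℝ) : ℝ :=
  sSup ((abs '' eigSet A) \ {sSup (abs '' eigSet A)})

/-- Vertices of the bipartite graph `B_{n,2}`: `L^n_n ∪ L^n_2`. -/
abbrev BVtx (n : ℕ) := {S : Submodule F2 (PV n) // S ∈ Lset n n ∪ Lset n 2}

/-- Adjacency in `B_{n,2}`: `x ∈ L^n_n` is adjacent to `t ∈ L^n_2` iff `t ⊊ x`. -/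
def BAdj {n : ℕ} (x y : BVtx n) : Prop :=
  (x.1 ∈ Lset n 2 ∧ y.1 ∈ Lset n n ∧ x.1 < y.1) ∨
  (y.1 ∈ Lset n 2 ∧ x.1 ∈ Lset n n ∧ y.1 < x.1)

/-- The adjacency matrix of `B_{n,2}`. -/
noncomputable def adjB (n : ℕ) : Matrix (BVtx n) (BVtx n) ℝ := adjMat BAdj

/-!
Graphs of symmetric matrices `M` over `F₂` are `2 ^ (n(n+1)/2)` Lagrangians `X`. Inside the graph
of `M`, the planes spanned by `(u, M u)` and `(v, M v)`, where `u, v` are the rows of a reduced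
echelon form with pivots in the first two coordinates, are `2 ^ (2(n-2))` distinct neighbours.
Altogether these planes `T` number at most `2 ^ (4n-4)`, since such a plane is determined by the
two echelon rows and the two vectors `M u`, `M v`. For a nonnegative symmetric matrix the Rayleigh
quotient of the vector equal to `√|T|` on `X` and to `√|X|` on `T` gives
`Δ² ≥ e(X, T)² / (|X| |T|)`, which here is `2 ^ (n(n+1)/2 - 4)`.
-/

open Matrix

section Spectral

variable {V : Type*} [Fintype V]

theorem eigSet_eq_spectrum [DecidableEq V] (A : Matrix V V ℝ) : eigSet A = spectrum ℝ A := by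
  ext μ
  rw [← Matrix.spectrum_toLin', ← Module.End.hasEigenvalue_iff_mem_spectrum,
    Module.End.hasEigenvalue_iff]
  simp [eigSet, Submodule.ne_bot_iff, and_comm]

open scoped MatrixOrder in
theorem dotProduct_mulVec_le_maxEig_mul {A : Matrix V V ℝ} (hA : A.IsHermitian) (v : V → ℝ) :
    v ⬝ᵥ A *ᵥ v ≤ maxEig A * (v ⬝ᵥ v) := by
  have hle : A ≤ algebraMap ℝ _ (maxEig A) := by
    refine le_algebraMap_of_spectrum_le fun x hx => ?_
    rw [← eigSet_eq_spectrum] at hx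
    exact le_csSup ((eigSet_eq_spectrum A ▸ Matrix.finite_real_spectrum).bddAbove) hx
  simpa [Algebra.algebraMap_eq_smul_one, sub_mulVec, dotProduct_sub, smul_mulVec,
    dotProduct_smul] using (Matrix.le_iff.mp hle).dotProduct_mulVec_nonneg v

theorem two_mul_mul_sum_block_le {A : Matrix V V ℝ} (hA : A.IsHermitian) (hA₀ : ∀ i j, 0 ≤ A i j)
    {X T : Finset V} (hXT : Disjoint X T) {a b : ℝ} (ha : 0 ≤ a) (hb : 0 ≤ b) :
    2 * a * b * ∑ x ∈ X, ∑ t ∈ T, A x t ≤ maxEig A * (a ^ 2 * #X + b ^ 2 * #T) := by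
  set v : V → ℝ := fun i => if i ∈ X then a else if i ∈ T then b else 0
  have hvX : ∀ i ∈ X, v i = a := fun i hi => if_pos hi
  have hvT : ∀ i ∈ T, v i = b := fun i hi => by simp [v, hi, Finset.disjoint_right.mp hXT hi]
  have hv₀ : ∀ i, 0 ≤ v i := fun i => by
    simp only [v]; split_ifs <;> first | assumption | exact le_rfl
  set f : V → V → ℝ := fun i j => v i * (A i j * v j)
  have hf₀ : ∀ i j, 0 ≤ f i j := fun i j => mul_nonneg (hv₀ i) (mul_nonneg (hA₀ i j) (hv₀ j))
  have hXT_block : ∑ i ∈ X, ∑ j ∈ T, f i j = a * b * ∑ x ∈ X, ∑ t ∈ T, A x t := by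
    simp only [mul_sum]
    refine sum_congr rfl fun i hi => sum_congr rfl fun j hj => ?_
    simp only [f, hvX i hi, hvT j hj]; ring
  have hTX_block : ∑ i ∈ T, ∑ j ∈ X, f i j = a * b * ∑ x ∈ X, ∑ t ∈ T, A x t := by
    rw [sum_comm, mul_sum]
    refine sum_congr rfl fun i hi => ?_
    rw [mul_sum]
    refine sum_congr rfl fun j hj => ?_
    simp only [f, hvX i hi, hvT j hj, ← hA.apply j i, star_trivial]; ring
  have hquad : 2 * a * b * ∑ x ∈ X, ∑ t ∈ T, A x t ≤ v ⬝ᵥ A *ᵥ v :=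
    calc 2 * a * b * ∑ x ∈ X, ∑ t ∈ T, A x t
        = ∑ i ∈ X, ∑ j ∈ T, f i j + ∑ i ∈ T, ∑ j ∈ X, f i j := by
          rw [hXT_block, hTX_block]; ring
      _ ≤ ∑ i ∈ X, ∑ j, f i j + ∑ i ∈ T, ∑ j, f i j := by
          have hrow : ∀ (i) (S : Finset V), ∑ j ∈ S, f i j ≤ ∑ j, f i j := fun i S =>
            sum_le_sum_of_subset_of_nonneg (subset_univ S) fun j _ _ => hf₀ i j
          exact add_le_add (sum_le_sum fun i _ => hrow i T) (sum_le_sum fun i _ => hrow i X)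
      _ = ∑ i ∈ X ∪ T, ∑ j, f i j := (sum_union hXT).symm
      _ ≤ ∑ i, ∑ j, f i j :=
          sum_le_sum_of_subset_of_nonneg (subset_univ _) fun i _ _ => sum_nonneg fun j _ => hf₀ i j
      _ = v ⬝ᵥ A *ᵥ v := by simp only [f, dotProduct, mulVec, mul_sum]
  have hnorm : v ⬝ᵥ v = a ^ 2 * #X + b ^ 2 * #T := by
    have hsupp : ∀ i ∈ univ, i ∉ X ∪ T → v i * v i = 0 := fun i _ hi => by
      rw [mem_union, not_or] at hi
      simp [v, hi.1, hi.2]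
    rw [dotProduct, ← sum_subset (subset_univ _) hsupp, sum_union hXT,
      sum_eq_card_nsmul fun i hi => show v i * v i = a * a by rw [hvX i hi],
      sum_eq_card_nsmul fun i hi => show v i * v i = b * b by rw [hvT i hi]]
    simp only [nsmul_eq_mul]; ring
  exact hquad.trans (hnorm ▸ dotProduct_mulVec_le_maxEig_mul hA v)

theorem sq_sum_block_le {A : Matrix V V ℝ} (hA : A.IsHermitian) (hA₀ : ∀ i j, 0 ≤ A i j)
    {X T : Finset V} (hXT : Disjoint X T) :
    (∑ x ∈ X, ∑ t ∈ T, A x t) ^ 2 ≤ maxEig A ^ 2 * (#X * #T) := by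
  have hs₀ : 0 ≤ ∑ x ∈ X, ∑ t ∈ T, A x t := sum_nonneg fun x _ => sum_nonneg fun t _ => hA₀ x t
  rcases X.eq_empty_or_nonempty with rfl | hX
  · simp
  rcases T.eq_empty_or_nonempty with rfl | hT
  · simp
  have key := two_mul_mul_sum_block_le hA hA₀ hXT (Real.sqrt_nonneg #T) (Real.sqrt_nonneg #X)
  rw [Real.sq_sqrt (by positivity), Real.sq_sqrt (by positivity), mul_assoc 2,
    ← Real.sqrt_mul (by positivity), mul_comm (#T : ℝ)] at key
  set r := √(#X * #T : ℝ)
  have hr : 0 < r := Real.sqrt_pos.mpr (by positivity)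
  have hrr : r * r = #X * #T := Real.mul_self_sqrt (by positivity)
  have hle : ∑ x ∈ X, ∑ t ∈ T, A x t ≤ maxEig A * r := by
    refine le_of_mul_le_mul_left ?_ (by positivity : (0 : ℝ) < 2 * r)
    calc 2 * r * ∑ x ∈ X, ∑ t ∈ T, A x t ≤ maxEig A * (#X * #T + #X * #T) := key
      _ = 2 * r * (maxEig A * r) := by rw [← hrr]; ring
  calc (∑ x ∈ X, ∑ t ∈ T, A x t) ^ 2 ≤ (maxEig A * r) ^ 2 := pow_le_pow_left₀ hs₀ hle 2
    _ = maxEig A ^ 2 * (#X * #T) := by rw [mul_pow, ← hrr]; ring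

theorem adjMat_isHermitian {Adj : V → V → Prop} (hAdj : ∀ x y, Adj x y → Adj y x) :
    (adjMat Adj).IsHermitian := by
  ext i j
  simp only [conjTranspose_apply, star_trivial, adjMat]
  exact if_congr ⟨hAdj j i, hAdj i j⟩ rfl rfl

theorem card_edges_sq_le {Adj : V → V → Prop} (hAdj : ∀ x y, Adj x y → Adj y x) {X T : Finset V}
    (hXT : Disjoint X T) :
    (#{p ∈ X ×ˢ T | Adj p.1 p.2} : ℝ) ^ 2 ≤ maxEig (adjMat Adj) ^ 2 * (#X * #T) := by
  have h := sq_sum_block_le (adjMat_isHermitian hAdj)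
    (fun i j => by unfold adjMat; split_ifs <;> norm_num) hXT
  have hsum : ∑ x ∈ X, ∑ t ∈ T, adjMat Adj x t = #{p ∈ X ×ˢ T | Adj p.1 p.2} := by
    rw [← sum_boole, sum_product]
    rfl
  rwa [hsum] at h

end Spectral

section GraphLagrangian

variable {n : ℕ}

def symMat (s : Sym2 (Fin n) → F2) : Matrix (Fin n) (Fin n) F2 :=
  Matrix.of fun i j => s s(i, j)

theorem symMat_transpose (s : Sym2 (Fin n) → F2) : (symMat s)ᵀ = symMat s := by
  ext i j
  simp [symMat, Sym2.eq_swap]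

def lagr (s : Sym2 (Fin n) → F2) : Submodule F2 (PV n) :=
  LinearMap.graph (symMat s).mulVecLin

theorem mem_lagr {s : Sym2 (Fin n) → F2} {x : PV n} :
    x ∈ lagr s ↔ x.2 = symMat s *ᵥ x.1 :=
  Iff.rfl

theorem lagr_isotropic (s : Sym2 (Fin n) → F2) : IsIsotropic (lagr s) := by
  intro x hx y hy
  change x.1 ⬝ᵥ y.2 + x.2 ⬝ᵥ y.1 = 0
  have hsymm : symMat s *ᵥ x.1 = x.1 ᵥ* symMat s := by
    rw [← vecMul_transpose, symMat_transpose]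
  rw [mem_lagr.mp hx, mem_lagr.mp hy, dotProduct_mulVec, hsymm, CharTwo.add_self_eq_zero]

theorem finrank_lagr (s : Sym2 (Fin n) → F2) : Module.finrank F2 (lagr s) = n := by
  rw [lagr, LinearMap.graph_eq_range_prod, LinearMap.finrank_range_of_inj, Module.finrank_fin_fun]
  exact fun v w h => congrArg Prod.fst h

theorem lagr_mem_Lset (s : Sym2 (Fin n) → F2) : lagr s ∈ Lset n n :=
  ⟨lagr_isotropic s, finrank_lagr s⟩

theorem lagr_injective : Function.Injective (lagr (n := n)) := by
  intro s s' h
  have hcol : ∀ i j, symMat s i j = symMat s' i j := by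
    intro i j
    have hm : (Pi.single j 1, symMat s *ᵥ Pi.single j 1) ∈ lagr s' := h ▸ mem_lagr.mpr rfl
    simpa [mulVec_single] using congrFun (mem_lagr.mp hm) i
  funext z
  induction z using Sym2.ind with
  | _ i j => exact hcol i j

end GraphLagrangian

section EchelonPlane

variable {m : ℕ}

def echelonRow₀ (p : Fin m → F2) : Fin (m + 2) → F2 := Fin.cons 1 (Fin.cons 0 p)

def echelonRow₁ (q : Fin m → F2) : Fin (m + 2) → F2 := Fin.cons 0 (Fin.cons 1 q)

def pairSpan (p q : Fin m → F2) (a b : Fin (m + 2) → F2) : Submodule F2 (PV (m + 2)) :=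
  Submodule.span F2 {(echelonRow₀ p, a), (echelonRow₁ q, b)}

theorem fst_eq_of_mem_pairSpan {p q : Fin m → F2} {a b : Fin (m + 2) → F2} {x : PV (m + 2)}
    (hx : x ∈ pairSpan p q a b) : x.1 = x.1 0 • echelonRow₀ p + x.1 1 • echelonRow₁ q := by
  obtain ⟨c, d, rfl⟩ := Submodule.mem_span_pair.mp hx
  simp [echelonRow₀, echelonRow₁]

theorem pairSpan_inj {p q p' q' : Fin m → F2} {a b a' b' : Fin (m + 2) → F2}
    (h : pairSpan p q a b = pairSpan p' q' a' b') : p = p' ∧ q = q' := by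
  have hp : (echelonRow₀ p, a) ∈ pairSpan p' q' a' b' :=
    h ▸ Submodule.subset_span (Set.mem_insert _ _)
  have hq : (echelonRow₁ q, b) ∈ pairSpan p' q' a' b' :=
    h ▸ Submodule.subset_span (Set.mem_insert_of_mem _ rfl)
  replace hp := fst_eq_of_mem_pairSpan hp
  replace hq := fst_eq_of_mem_pairSpan hq
  simp only [echelonRow₀, echelonRow₁, Fin.cons_zero, Fin.cons_one] at hp hq
  exact ⟨by simpa using hp, by simpa using hq⟩

theorem finrank_pairSpan (p q : Fin m → F2) (a b : Fin (m + 2) → F2) :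
    Module.finrank F2 (pairSpan p q a b) = 2 := by
  have hli : LinearIndependent F2 ![(echelonRow₀ p, a), (echelonRow₁ q, b)] := by
    refine LinearIndependent.pair_iff.mpr fun c d hcd => ?_
    have hfst := congrArg Prod.fst hcd
    exact ⟨by simpa [echelonRow₀, echelonRow₁] using congrFun hfst 0,
      by simpa [echelonRow₀, echelonRow₁] using congrFun hfst 1⟩
  rw [pairSpan, ← Matrix.range_cons_cons_empty _ _ ![], finrank_span_eq_card hli, Fintype.card_fin]

end EchelonPlane

section Vertices

variable {m : ℕ}

def plane (s : Sym2 (Fin (m + 2)) → F2) (p q : Fin m → F2) : Submodule F2 (PV (m + 2)) :=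
  pairSpan p q (symMat s *ᵥ echelonRow₀ p) (symMat s *ᵥ echelonRow₁ q)

theorem plane_le_lagr (s : Sym2 (Fin (m + 2)) → F2) (p q : Fin m → F2) : plane s p q ≤ lagr s := by
  rw [plane, pairSpan, Submodule.span_le, Set.insert_subset_iff, Set.singleton_subset_iff]
  exact ⟨mem_lagr.mpr rfl, mem_lagr.mpr rfl⟩

theorem plane_mem_Lset (s : Sym2 (Fin (m + 2)) → F2) (p q : Fin m → F2) :
    plane s p q ∈ Lset (m + 2) 2 :=
  ⟨fun x hx y hy => lagr_isotropic s x (plane_le_lagr s p q hx) y (plane_le_lagr s p q hy),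
    finrank_pairSpan _ _ _ _⟩

def lagrVtx {n : ℕ} (s : Sym2 (Fin n) → F2) : BVtx n := ⟨lagr s, Or.inl (lagr_mem_Lset s)⟩

def planeVtx (x : (Sym2 (Fin (m + 2)) → F2) × (Fin m → F2) × (Fin m → F2)) : BVtx (m + 2) :=
  ⟨plane x.1 x.2.1 x.2.2, Or.inr (plane_mem_Lset _ _ _)⟩

noncomputable def lagrVertices (n : ℕ) : Finset (BVtx n) := univ.image lagrVtx

noncomputable def planeVertices (m : ℕ) : Finset (BVtx (m + 2)) := univ.image planeVtx

theorem card_lagrVertices (n : ℕ) : #(lagrVertices n) = 2 ^ Fintype.card (Sym2 (Fin n)) := by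
  rw [lagrVertices, card_image_of_injective _ fun s s' h => lagr_injective (congrArg Subtype.val h),
    card_univ, Fintype.card_fun, ZMod.card]

theorem card_planeVertices_le (m : ℕ) : #(planeVertices m) ≤ 2 ^ (4 * m + 4) := by
  have hsub : (planeVertices m).image Subtype.val ⊆
      (univ : Finset ((Fin m → F2) × (Fin m → F2) × (Fin (m + 2) → F2) × (Fin (m + 2) → F2))).image
        fun x => pairSpan x.1 x.2.1 x.2.2.1 x.2.2.2 := by
    intro t ht
    obtain ⟨_, hz, rfl⟩ := mem_image.mp ht
    obtain ⟨⟨s, p, q⟩, -, rfl⟩ := mem_image.mp hz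
    exact mem_image.mpr ⟨(p, q, symMat s *ᵥ echelonRow₀ p, symMat s *ᵥ echelonRow₁ q),
      mem_univ _, rfl⟩
  calc #(planeVertices m) = #((planeVertices m).image Subtype.val) :=
        (card_image_of_injective _ Subtype.val_injective).symm
    _ ≤ _ := (card_le_card hsub).trans card_image_le
    _ = 2 ^ (4 * m + 4) := by
        simp only [card_univ, Fintype.card_prod, Fintype.card_fun, ZMod.card, Fintype.card_fin,
          ← pow_add]
        ring_nf

theorem plane_lt_lagr (hm : m ≠ 0) (s : Sym2 (Fin (m + 2)) → F2) (p q : Fin m → F2) :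
    plane s p q < lagr s := by
  refine (plane_le_lagr s p q).lt_of_ne fun h => ?_
  have h2 := (plane_mem_Lset s p q).2
  rw [h, finrank_lagr] at h2
  omega

theorem disjoint_lagrVertices_planeVertices (hm : m ≠ 0) :
    Disjoint (lagrVertices (m + 2)) (planeVertices m) := by
  refine disjoint_left.mpr fun z hX hT => ?_
  obtain ⟨s, -, rfl⟩ := mem_image.mp hX
  obtain ⟨x, -, hx⟩ := mem_image.mp hT
  have h2 := (plane_mem_Lset x.1 x.2.1 x.2.2).2
  rw [show plane x.1 x.2.1 x.2.2 = lagr s from congrArg Subtype.val hx, finrank_lagr] at h2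
  omega

theorem card_edges_ge (hm : m ≠ 0) :
    2 ^ (Fintype.card (Sym2 (Fin (m + 2))) + 2 * m) ≤
      #{e ∈ lagrVertices (m + 2) ×ˢ planeVertices m | BAdj e.1 e.2} := by
  set f : (Sym2 (Fin (m + 2)) → F2) × (Fin m → F2) × (Fin m → F2) → BVtx (m + 2) × BVtx (m + 2) :=
    fun x => (lagrVtx x.1, planeVtx x)
  have hinj : Function.Injective f := by
    rintro ⟨s, p, q⟩ ⟨s', p', q'⟩ h
    obtain ⟨hs, hpq⟩ := Prod.mk.inj h
    obtain rfl := lagr_injective (congrArg Subtype.val hs)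
    obtain ⟨rfl, rfl⟩ := pairSpan_inj (congrArg Subtype.val hpq)
    rfl
  have hsub : univ.image f ⊆ {e ∈ lagrVertices (m + 2) ×ˢ planeVertices m | BAdj e.1 e.2} := by
    intro e he
    obtain ⟨x, -, rfl⟩ := mem_image.mp he
    refine mem_filter.mpr ⟨mem_product.mpr ⟨mem_image_of_mem _ (mem_univ _),
      mem_image_of_mem _ (mem_univ _)⟩, Or.inr ⟨?_, lagr_mem_Lset _, plane_lt_lagr hm _ _ _⟩⟩
    exact plane_mem_Lset _ _ _
  calc 2 ^ (Fintype.card (Sym2 (Fin (m + 2))) + 2 * m) = #(univ.image f) := by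
        rw [card_image_of_injective _ hinj, card_univ]
        simp only [Fintype.card_prod, Fintype.card_fun, ZMod.card, Fintype.card_fin, ← pow_add]
        ring_nf
    _ ≤ _ := card_le_card hsub

end Vertices

theorem exponent_add_six_eq_card_sym2 {n : ℕ} (hn : 3 ≤ n) :
    3 * (n - 3) + (n - 2) * (n - 3) / 2 + 6 = Fintype.card (Sym2 (Fin n)) := by
  obtain ⟨k, rfl⟩ : ∃ k, n = k + 3 := ⟨n - 3, by omega⟩
  rw [Sym2.card, Fintype.card_fin, Nat.choose_two_right]
  simp only [Nat.add_sub_cancel, show k + 3 - 2 = k + 1 by omega]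
  rw [show (k + 3 + 1) * (k + 3) = (k + 1) * k + 2 * (3 * k + 6) by ring,
    Nat.add_mul_div_left _ _ two_pos]
  ring

theorem BAdj.symm {n : ℕ} {x y : BVtx n} (h : BAdj x y) : BAdj y x := Or.symm h

/-- For `n > 8`, the largest eigenvalue `Δ` of the adjacency matrix of `B_{n,2}` satisfies
`Δ² ≥ 2^{3(n−3) + (n−2)(n−3)/2}`. -/
theorem maxEig_B_sq_ge :
    ∀ n : ℕ, 8 < n →
      (maxEig (adjB n)) ^ 2 ≥ (2 : ℝ) ^ (3 * (n - 3) + (n - 2) * (n - 3) / 2) := by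
  intro n hn
  obtain ⟨m, rfl⟩ : ∃ m, n = m + 2 := ⟨n - 2, by omega⟩
  have hm : m ≠ 0 := by omega
  have hexp := exponent_add_six_eq_card_sym2 (by omega : 3 ≤ m + 2)
  set N := Fintype.card (Sym2 (Fin (m + 2)))
  have hE : (2 : ℝ) ^ (N + 2 * m) ≤
      #{e ∈ lagrVertices (m + 2) ×ˢ planeVertices m | BAdj e.1 e.2} := by
    exact_mod_cast card_edges_ge hm
  have hX : (#(lagrVertices (m + 2)) : ℝ) = 2 ^ N := by exact_mod_cast card_lagrVertices _
  have hT : (#(planeVertices m) : ℝ) ≤ 2 ^ (4 * m + 4) := by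
    exact_mod_cast card_planeVertices_le _
  have hspec := card_edges_sq_le (Adj := BAdj) (fun _ _ => BAdj.symm)
    (disjoint_lagrVertices_planeVertices hm)
  rw [hX] at hspec
  refine le_of_mul_le_mul_right (a := (2 : ℝ) ^ N * 2 ^ (4 * m + 4)) ?_ (by positivity)
  calc _ ≤ ((2 : ℝ) ^ (N + 2 * m)) ^ 2 := by
        rw [← pow_add, ← pow_add, ← pow_mul]
        exact pow_le_pow_right₀ one_le_two (by omega)
    _ ≤ _ := pow_le_pow_left₀ (by positivity) hE 2
    _ ≤ _ := hspec
    _ ≤ _ := mul_le_mul_of_nonneg_left (by gcongr) (sq_nonneg _)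
end

section
/- Let S₁, S₂ be isotropic subspaces of (ZMod 2)^{2n} and let f₁, f₂ be outcomes of S₁ and S₂ respectively. If f₁ and f₂ are inconsistent, i.e. there exists v ∈ S₁ ∩ S₂ with f₁(v) ≠ f₂(v), then |{v ∈ S₁ ∩ S₂ : f₁(v) ≠ f₂(v)}| = 2^{dim(S₁∩S₂) − 1}: the two outcomes disagree on exactly half of the intersection. -/
open Finset

/-! On `S₁ ⊓ S₂` both outcomes satisfy `f(x + y) = f x + f y + w(x, y)` with the same `w`, which
therefore cancels in `f₁ + f₂`: the discrepancy `f₁ + f₂` is an additive map to `ZMod 2`. The outcomes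
are inconsistent exactly when it is nonzero, and a nonzero additive map to `ZMod 2` on a finite
group takes the value `1` on exactly half of it, i.e. on `2 ^ (dim - 1)` vectors. -/

lemma ZMod.ne_iff_add_eq_one {a b : ZMod 2} : a ≠ b ↔ a + b = 1 := by
  revert a b; decide

lemma AddMonoidHom.natCard_fiber_one_mul_two {G : Type*} [AddGroup G] [Finite G]
    (g : G →+ ZMod 2) {x₀ : G} (hx₀ : g x₀ = 1) :
    Nat.card {x // g x = 1} * 2 = Nat.card G := by
  classical
  have := Fintype.ofFinite G
  have hcompl : #{x | ¬g x = 1} = #{x | g x = 0} :=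
    congrArg card <| filter_congr fun x _ => by generalize g x = a; revert a; decide
  have hfibres : #{x | g x = 0} = #{x | g x = 1} :=
    AddMonoidHom.card_fiber_eq_of_mem_range g ⟨0, map_zero g⟩ ⟨x₀, hx₀⟩
  rw [Nat.card_eq_fintype_card, Nat.card_eq_fintype_card, Fintype.card_subtype, ← card_univ,
    ← card_filter_add_card_filter_not (s := univ) (fun x => g x = 1), hcompl, hfibres]
  ring

namespace IsOutcome

variable {n : ℕ} {S T : Submodule F2 (PV n)}

lemma comp_inclusion {f : T → F2} (hf : IsOutcome T f) (h : S ≤ T) :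
    IsOutcome S (f ∘ Submodule.inclusion h) :=
  fun x y => hf (Submodule.inclusion h x) (Submodule.inclusion h y)

def discrepancy {f g : S → F2} (hf : IsOutcome S f) (hg : IsOutcome S g) : S →+ F2 :=
  AddMonoidHom.mk' (f + g) fun x y => by
    simp only [Pi.add_apply, hf x y, hg x y]
    linear_combination CharTwo.add_self_eq_zero (wght (x : PV n) y)

end IsOutcome

/-- **Disagreement on exactly half.** If outcomes `f₁, f₂` of isotropic subspaces `S₁, S₂`
are inconsistent, then they disagree on exactly `2^{dim(S₁∩S₂)−1}` vectors of `S₁ ∩ S₂`. -/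
theorem inconsistent_outcomes_disagree_on_half :
    ∀ n : ℕ, ∀ S₁ S₂ : Submodule F2 (PV n), IsIsotropic S₁ → IsIsotropic S₂ →
      ∀ (f₁ : S₁ → F2) (f₂ : S₂ → F2), IsOutcome S₁ f₁ → IsOutcome S₂ f₂ →
        (∃ v, ∃ (h1 : v ∈ S₁) (h2 : v ∈ S₂), f₁ ⟨v, h1⟩ ≠ f₂ ⟨v, h2⟩) →
        Nat.card {v : PV n | ∃ (h1 : v ∈ S₁) (h2 : v ∈ S₂), f₁ ⟨v, h1⟩ ≠ f₂ ⟨v, h2⟩} =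
          2 ^ (Module.finrank F2 ↥(S₁ ⊓ S₂) - 1) := by
  intro n S₁ S₂ _ _ f₁ f₂ hf₁ hf₂ ⟨v, hv₁, hv₂, hne⟩
  let g := (hf₁.comp_inclusion inf_le_left).discrepancy (hf₂.comp_inclusion inf_le_right)
  have hdisagree : Nat.card {v : PV n | ∃ (h1 : v ∈ S₁) (h2 : v ∈ S₂), f₁ ⟨v, h1⟩ ≠ f₂ ⟨v, h2⟩} =
      Nat.card {x // g x = 1} :=
    Nat.card_congr
      { toFun := fun v => ⟨⟨v, v.2.1, v.2.2.1⟩, ZMod.ne_iff_add_eq_one.1 v.2.2.2⟩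
        invFun := fun x => ⟨x.1, x.1.2.1, x.1.2.2, ZMod.ne_iff_add_eq_one.2 x.2⟩
        left_inv := fun _ => rfl
        right_inv := fun _ => rfl }
  have hhalf := g.natCard_fiber_one_mul_two (x₀ := ⟨v, hv₁, hv₂⟩) (ZMod.ne_iff_add_eq_one.1 hne)
  rw [Module.natCard_eq_pow_finrank (K := F2) (V := ↥(S₁ ⊓ S₂)), Nat.card_zmod] at hhalf
  rw [hdisagree]
  cases h : Module.finrank F2 ↥(S₁ ⊓ S₂) with
  | zero => rw [h] at hhalf; omega
  | succ d => rw [h, pow_succ] at hhalf; exact Nat.eq_of_mul_eq_mul_right two_pos hhalf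
end
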